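/- The 5-point best-packing distance of the unit sphere S² in ℝ³ (with Euclidean metric) equals √2. -/

import Mathlib

open scoped BigOperators
open Filter Metric

/-- Separation distance of an `N`-point configuration. -/
noncomputable def sep {E : Type*} [MetricSpace E] {N : ℕ} (x : Fin N → E) : ℝ :=
  ⨅ p : {p : Fin N × Fin N // p.1 ≠ p.2}, dist (x p.1.1) (x p.1.2)

/-- Mesh norm (covering radius) of a configuration relative to a set `S`. -/
noncomputable def mesh {E : Type*} [MetricSpace E] {N : ℕ} (S : Set E) (x : Fin N → E) : ℝ :=
  ⨆ y : S, ⨅ i, dist (y : E) (x i)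

/-- `N`-point best-packing distance of the set `S`. -/
noncomputable def packDist {E : Type*} [MetricSpace E] (S : Set E) (N : ℕ) : ℝ :=
  ⨆ x : {x : Fin N → E // Function.Injective x ∧ ∀ i, x i ∈ S}, sep x.1

/-- Riesz `s`-energy of a configuration. -/
noncomputable def energy {E : Type*} [MetricSpace E] {N : ℕ} (s : ℝ) (x : Fin N → E) : ℝ :=
  ∑ i, ∑ j ∈ Finset.univ.filter (· ≠ i), dist (x i) (x j) ^ (-s)

/-- Minimal `N`-point Riesz `s`-energy of the set `S`. -/
noncomputable def minEnergy {E : Type*} [MetricSpace E] (S : Set E) (N : ℕ) (s : ℝ) : ℝ :=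
  ⨅ x : {x : Fin N → E // Function.Injective x ∧ ∀ i, x i ∈ S}, energy s x.1

/-!
For unit vectors, `‖x - y‖² = 2 - 2⟪x, y⟫`, so two points of the sphere are at distance
at most `√2` exactly when their inner product is nonnegative. Pairwise obtuse vectors are
very nearly linearly independent: in a relation `∑ gᵢ vᵢ = 0` the positive part `∑ gᵢ⁺ vᵢ`
equals the negative part `∑ gᵢ⁻ vᵢ`, and its squared norm `∑ gᵢ⁺ gⱼ⁻ ⟪vᵢ, vⱼ⟫` is `≤ 0`;
pairing the vanishing combinations with one further obtuse vector kills all coefficients.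
Hence `ℝⁿ` holds at most `n + 1` pairwise obtuse vectors, and among five points of `S²`
two are within `√2`. The square pyramid `±e₀, ±e₁, e₂` attains `√2`.
-/

open scoped RealInnerProductSpace

section PairwiseObtuse

variable {E : Type*} [NormedAddCommGroup E] [InnerProductSpace ℝ E] {ι : Type*} [Fintype ι]

lemma sum_posPart_smul_eq_zero_of_pairwise_inner_neg {v : ι → E}
    (hv : Pairwise fun i j => ⟪v i, v j⟫ < 0) {g : ι → ℝ} (hg : ∑ i, g i • v i = 0) :
    ∑ i, (g i)⁺ • v i = 0 := by
  set a := ∑ i, (g i)⁺ • v i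
  have ha : a = ∑ i, (g i)⁻ • v i := by
    rw [← sub_eq_zero, ← Finset.sum_sub_distrib, ← hg]
    simp only [← sub_smul, posPart_sub_negPart]
  have hterm : ∀ i j, (g i)⁺ * ((g j)⁻ * ⟪v j, v i⟫) ≤ 0 := by
    intro i j
    rcases eq_or_ne j i with rfl | hji
    · have : (g j)⁺ * (g j)⁻ = 0 := by
        rcases le_total 0 (g j) with h | h <;> simp [h]
      simp [← mul_assoc, this]
    · exact mul_nonpos_of_nonneg_of_nonpos (posPart_nonneg _)
        (mul_nonpos_of_nonneg_of_nonpos (negPart_nonneg _) (hv hji).le)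
  have hnorm : ⟪a, a⟫ ≤ 0 := by
    conv_lhs => enter [2]; rw [ha]
    simp only [a, sum_inner, inner_sum, real_inner_smul_left, real_inner_smul_right]
    exact Finset.sum_nonpos fun i _ => Finset.sum_nonpos fun j _ => hterm i j
  exact real_inner_self_nonpos.mp hnorm

omit [Fintype ι] in
lemma Finset.eq_zero_of_sum_smul_eq_zero_of_inner_neg {s : Finset ι} {v : ι → E} {u : E}
    (hu : ∀ i ∈ s, ⟪v i, u⟫ < 0) {c : ι → ℝ} (hc : ∀ i ∈ s, 0 ≤ c i)
    (hcv : ∑ i ∈ s, c i • v i = 0) : ∀ i ∈ s, c i = 0 := by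
  have hsum : ∑ i ∈ s, c i * ⟪v i, u⟫ = 0 := by
    simpa only [sum_inner, real_inner_smul_left, inner_zero_left] using congrArg (⟪·, u⟫) hcv
  rw [Finset.sum_eq_zero_iff_of_nonpos fun i hi =>
    mul_nonpos_of_nonneg_of_nonpos (hc i hi) (hu i hi).le] at hsum
  intro i hi
  exact (mul_eq_zero.mp (hsum i hi)).resolve_right (hu i hi).ne

lemma linearIndependent_of_pairwise_inner_neg {v : ι → E}
    (hv : Pairwise fun i j => ⟪v i, v j⟫ < 0) {u : E} (hu : ∀ i, ⟪v i, u⟫ < 0) :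
    LinearIndependent ℝ v := by
  rw [Fintype.linearIndependent_iff]
  intro g hg i
  have vanish : ∀ c : ι → ℝ, ∑ i, c i • v i = 0 → (c i)⁺ = 0 := fun c hc =>
    Finset.univ.eq_zero_of_sum_smul_eq_zero_of_inner_neg (fun i _ => hu i)
      (fun i _ => posPart_nonneg (c i))
      (sum_posPart_smul_eq_zero_of_pairwise_inner_neg hv hc) i (Finset.mem_univ i)
  have hpos := vanish g hg
  have hneg := vanish (-g) (by simp [hg])
  rw [Pi.neg_apply, posPart_neg] at hneg
  rw [← posPart_sub_negPart (g i), hpos, hneg, sub_zero]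

lemma card_le_finrank_add_one_of_pairwise_inner_neg [FiniteDimensional ℝ E] {v : ι → E}
    (hv : Pairwise fun i j => ⟪v i, v j⟫ < 0) :
    Fintype.card ι ≤ Module.finrank ℝ E + 1 := by
  classical
  rcases isEmpty_or_nonempty ι with hι | ⟨⟨k⟩⟩
  · simp
  have hli : LinearIndependent ℝ fun i : {i // i ≠ k} => v i :=
    linearIndependent_of_pairwise_inner_neg (fun i j hij => hv (Subtype.coe_ne_coe.mpr hij))
      (u := v k) fun i => hv i.2
  have hcard := hli.fintype_card_le_finrank
  rw [Fintype.card_subtype_compl, Fintype.card_subtype_eq] at hcard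
  omega

lemma exists_inner_nonneg_of_finrank_add_two_le [FiniteDimensional ℝ E]
    (hι : Module.finrank ℝ E + 2 ≤ Fintype.card ι) (v : ι → E) :
    ∃ i j, i ≠ j ∧ 0 ≤ ⟪v i, v j⟫ := by
  by_contra! h
  have := card_le_finrank_add_one_of_pairwise_inner_neg (v := v) fun i j hij => h i j hij
  omega

end PairwiseObtuse

section Sphere

variable {E : Type*} [NormedAddCommGroup E] [InnerProductSpace ℝ E]

lemma dist_sq_eq_two_sub_two_inner {x y : E} (hx : ‖x‖ = 1) (hy : ‖y‖ = 1) :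
    dist x y ^ 2 = 2 - 2 * ⟪x, y⟫ := by
  rw [dist_eq_norm, norm_sub_sq_real, hx, hy]
  ring

lemma dist_le_sqrt_two_of_inner_nonneg {x y : E} (hx : ‖x‖ = 1) (hy : ‖y‖ = 1)
    (h : 0 ≤ ⟪x, y⟫) : dist x y ≤ √2 := by
  rw [Real.le_sqrt dist_nonneg zero_le_two, dist_sq_eq_two_sub_two_inner hx hy]
  linarith

lemma sqrt_two_le_dist_of_inner_nonpos {x y : E} (hx : ‖x‖ = 1) (hy : ‖y‖ = 1)
    (h : ⟪x, y⟫ ≤ 0) : √2 ≤ dist x y := by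
  rw [← Real.sqrt_sq dist_nonneg, dist_sq_eq_two_sub_two_inner hx hy]
  exact Real.sqrt_le_sqrt (by linarith)

end Sphere

section Separation

variable {E : Type*} [MetricSpace E] {N : ℕ}

lemma sep_le_dist (x : Fin N → E) {i j : Fin N} (hij : i ≠ j) : sep x ≤ dist (x i) (x j) :=
  ciInf_le (Set.finite_range _).bddBelow (⟨(i, j), hij⟩ : {p : Fin N × Fin N // p.1 ≠ p.2})

lemma le_sep {x : Fin N → E} {r : ℝ} (hN : 1 < N) (h : ∀ i j, i ≠ j → r ≤ dist (x i) (x j)) :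
    r ≤ sep x :=
  have : Nonempty {p : Fin N × Fin N // p.1 ≠ p.2} :=
    ⟨⟨(Fin.mk 0 (by omega), Fin.mk 1 hN), by simp [Fin.ext_iff]⟩⟩
  le_ciInf fun p => h _ _ p.2

end Separation

section PackingOnSphere

variable {E : Type*} [NormedAddCommGroup E] [InnerProductSpace ℝ E] [FiniteDimensional ℝ E]
  {N : ℕ}

lemma sep_le_sqrt_two_of_mem_sphere (hN : Module.finrank ℝ E + 2 ≤ N) {x : Fin N → E}
    (hx : ∀ i, x i ∈ sphere (0 : E) 1) : sep x ≤ √2 := by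
  obtain ⟨i, j, hij, hinner⟩ :=
    exists_inner_nonneg_of_finrank_add_two_le (by simpa using hN) x
  simp only [mem_sphere_zero_iff_norm] at hx
  exact (sep_le_dist x hij).trans (dist_le_sqrt_two_of_inner_nonneg (hx i) (hx j) hinner)

lemma packDist_sphere_le_sqrt_two (hN : Module.finrank ℝ E + 2 ≤ N) :
    packDist (sphere (0 : E) 1) N ≤ √2 :=
  Real.iSup_le (fun x => sep_le_sqrt_two_of_mem_sphere hN x.2.2) (Real.sqrt_nonneg 2)

end PackingOnSphere

section SquarePyramid

noncomputable def squarePyramid : Fin 5 → EuclideanSpace ℝ (Fin 3) :=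
  let e : Fin 3 → EuclideanSpace ℝ (Fin 3) := fun k => EuclideanSpace.single k 1
  ![e 0, -e 0, e 1, -e 1, e 2]

lemma norm_squarePyramid (i : Fin 5) : ‖squarePyramid i‖ = 1 := by
  fin_cases i <;> simp [squarePyramid]

lemma inner_squarePyramid_nonpos {i j : Fin 5} (hij : i ≠ j) :
    ⟪squarePyramid i, squarePyramid j⟫ ≤ 0 := by
  fin_cases i <;> fin_cases j <;> simp_all [squarePyramid, EuclideanSpace.inner_single_left]

lemma sqrt_two_le_dist_squarePyramid {i j : Fin 5} (hij : i ≠ j) :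
    √2 ≤ dist (squarePyramid i) (squarePyramid j) :=
  sqrt_two_le_dist_of_inner_nonpos (norm_squarePyramid i) (norm_squarePyramid j)
    (inner_squarePyramid_nonpos hij)

lemma squarePyramid_injective : Function.Injective squarePyramid := by
  intro i j hij
  by_contra hne
  have := sqrt_two_le_dist_squarePyramid hne
  rw [hij, dist_self] at this
  exact absurd this (by norm_num)

end SquarePyramid

theorem stmt_9 :
    packDist (Metric.sphere (0 : EuclideanSpace ℝ (Fin 3)) 1) 5 = Real.sqrt 2 := by
  have hN : Module.finrank ℝ (EuclideanSpace ℝ (Fin 3)) + 2 ≤ 5 := by simp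
  have hbdd : BddAbove (Set.range fun x : {x : Fin 5 → EuclideanSpace ℝ (Fin 3) //
      Function.Injective x ∧ ∀ i, x i ∈ sphere 0 1} => sep x.1) :=
    ⟨√2, Set.forall_mem_range.2 fun x => sep_le_sqrt_two_of_mem_sphere hN x.2.2⟩
  refine le_antisymm (packDist_sphere_le_sqrt_two hN) (le_ciSup_of_le hbdd
    ⟨squarePyramid, squarePyramid_injective, fun i => ?_⟩ ?_)
  · exact mem_sphere_zero_iff_norm.2 (norm_squarePyramid i)
  · exact le_sep (by norm_num) fun i j hij => sqrt_two_le_dist_squarePyramid hij
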